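/- Let Π be an sl(2,ℂ)-module with Casimir eigenvalue λ² - 1, λ ∉ {0, -δ}, δ ∈ {+1,-1}, such that Π ⊗ ℂ³ decomposes into Casimir eigenspaces with eigenvalues (λ+2)²-1, λ²-1, (λ-2)²-1. If T: Π → ℂ_ν satisfies T(Hu) = νT(u), then for all u ∈ Π, (T ⊗ pr_{F→F'}) ∘ pr_{λ→λ+2δ}(u ⊗ H) = ((λ+δ)² - ν²)/(2λ(λ+δ)) · Tu, where pr_{λ→λ+2δ} is the projection onto the Casimir eigenspace with eigenvalue (λ+2δ)² - 1 and pr_{F→F'} projects the adjoint representation ℂ³ onto ℂH ≅ ℂ. -/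

import Mathlib

open scoped TensorProduct

noncomputable section

/-- A (not necessarily bracket-compatible) action of the generators `H, X, Y`
of `sl(2,ℂ)` on a complex vector space. -/
structure SL2Rep (V : Type*) [AddCommGroup V] [Module ℂ V] where
  H : Module.End ℂ V
  X : Module.End ℂ V
  Y : Module.End ℂ V

namespace SL2Rep

variable {V W : Type*} [AddCommGroup V] [Module ℂ V] [AddCommGroup W] [Module ℂ W]

/-- The defining relations of an `sl₂`-triple. -/
def IsSl2Rep (ρ : SL2Rep V) : Prop :=
  ρ.H ∘ₗ ρ.X - ρ.X ∘ₗ ρ.H = (2:ℂ) • ρ.X ∧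
  ρ.H ∘ₗ ρ.Y - ρ.Y ∘ₗ ρ.H = (-2:ℂ) • ρ.Y ∧
  ρ.X ∘ₗ ρ.Y - ρ.Y ∘ₗ ρ.X = ρ.H

/-- The Casimir operator `Ω = H² + 2(XY + YX)`. -/
def casimir (ρ : SL2Rep V) : Module.End ℂ V :=
  ρ.H ∘ₗ ρ.H + (2:ℂ) • (ρ.X ∘ₗ ρ.Y + ρ.Y ∘ₗ ρ.X)

/-- The diagonal (coproduct) action on a tensor product. -/
def tensor (ρ : SL2Rep V) (σ : SL2Rep W) : SL2Rep (V ⊗[ℂ] W) where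
  H := TensorProduct.map ρ.H LinearMap.id + TensorProduct.map LinearMap.id σ.H
  X := TensorProduct.map ρ.X LinearMap.id + TensorProduct.map LinearMap.id σ.X
  Y := TensorProduct.map ρ.Y LinearMap.id + TensorProduct.map LinearMap.id σ.Y

end SL2Rep

/-- Matrix of `H` on the standard basis of the irreducible `(m+1)`-dimensional module. -/
def Hmat (m : ℕ) : Matrix (Fin (m+1)) (Fin (m+1)) ℂ :=
  Matrix.of fun i j => if i = j then ((m:ℂ) - 2 * ((i:ℕ):ℂ)) else 0

/-- Matrix of `X` (raising operator): `X e_j = j (m+1-j) e_(j-1)`. -/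
def Xmat (m : ℕ) : Matrix (Fin (m+1)) (Fin (m+1)) ℂ :=
  Matrix.of fun i j => if (j:ℕ) = (i:ℕ) + 1 then ((j:ℕ):ℂ) * ((m:ℂ) + 1 - ((j:ℕ):ℂ)) else 0

/-- Matrix of `Y` (lowering operator): `Y e_j = e_(j+1)`. -/
def Ymat (m : ℕ) : Matrix (Fin (m+1)) (Fin (m+1)) ℂ :=
  Matrix.of fun i j => if (i:ℕ) = (j:ℕ) + 1 then 1 else 0

/-- The irreducible `(m+1)`-dimensional representation `V_m` of `sl(2,ℂ)`. -/
def stdRep (m : ℕ) : SL2Rep (Fin (m+1) → ℂ) :=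
  ⟨Matrix.toLin' (Hmat m), Matrix.toLin' (Xmat m), Matrix.toLin' (Ymat m)⟩

/-- The element `H ∈ ℂ³ = sl(2,ℂ)` (adjoint representation), in the basis `(X, H, Y)`. -/
def Hvec : Fin 3 → ℂ := Pi.single 1 1

/-- The adjoint representation of `sl(2,ℂ)` on `ℂ³`, in the basis `(X, H, Y)`. -/
def adRep : SL2Rep (Fin 3 → ℂ) :=
  ⟨Matrix.toLin' !![(2:ℂ),0,0; 0,0,0; 0,0,-2],
   Matrix.toLin' !![(0:ℂ),-2,0; 0,0,1; 0,0,0],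
   Matrix.toLin' !![(0:ℂ),0,0; -1,0,0; 0,2,0]⟩

/-- The projection `pr_{F→F'} : ℂ³ = ℂX ⊕ ℂH ⊕ ℂY → ℂH ≅ ℂ`. -/
def prFF' : (Fin 3 → ℂ) →ₗ[ℂ] ℂ := LinearMap.proj 1

/-!
The three projections diagonalise the Casimir `Ω` of `Π ⊗ ℂ³`, and `λ ≠ 0, -δ` makes
`(λ+2δ)² - 1` differ from the other two eigenvalues, so `P_{λ+2δ}` is the Lagrange interpolation
polynomial of `Ω` at that eigenvalue, with denominator `32 λ (λ+δ)`. It therefore suffices to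
know `T ⊗ pr` on `Ω^k (u ⊗ H)` for `k ≤ 2`. As `Ω = 8` on `ℂ³`, the tensor Casimir is `λ² + 7`
plus twice the mixed term `2 X⊗Y + 2 Y⊗X + H⊗H`. The mixed term moves `H ∈ ℂ³` into
`ℂX ⊕ ℂY`, which `pr` kills, and back with total coefficient `8 T(XY + YX)u = 4 (λ² - 1 - ν²) T u`,
by the Casimir relation seen through the `H`-eigenfunctional `T`.
-/

theorem sub_algebraMap_mul_sub_algebraMap_eq_smul {R A : Type*} [CommRing R] [Ring A]
    [Algebra R A] {x p q r : A} {a b c : R} (hsum : p + q + r = 1)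
    (hp : x * p = a • p) (hq : x * q = b • q) (hr : x * r = c • r) :
    (x - algebraMap R A b) * (x - algebraMap R A c) = ((a - b) * (a - c)) • p := by
  have shift : ∀ {s : A} {d : R} (e : R), x * s = d • s →
      (x - algebraMap R A e) * s = (d - e) • s :=
    fun e h => by rw [sub_mul, h, ← Algebra.smul_def, sub_smul]
  have eval : ∀ {s : A} {d : R}, x * s = d • s →
      (x - algebraMap R A b) * (x - algebraMap R A c) * s = ((d - b) * (d - c)) • s :=
    fun h => by rw [mul_assoc, shift c h, mul_smul_comm, shift b h, smul_smul, mul_comm]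
  rw [← mul_one ((x - _) * _), ← hsum, mul_add, mul_add, eval hp, eval hq, eval hr]
  simp

namespace SL2Rep

variable {V W : Type*} [AddCommGroup V] [Module ℂ V] [AddCommGroup W] [Module ℂ W]

theorem casimir_tensor_tmul (ρ : SL2Rep V) (σ : SL2Rep W) (v : V) (w : W) :
    (ρ.tensor σ).casimir (v ⊗ₜ w) =
      ρ.casimir v ⊗ₜ w + v ⊗ₜ σ.casimir w + (4:ℂ) • (ρ.X v ⊗ₜ σ.Y w)
        + (4:ℂ) • (ρ.Y v ⊗ₜ σ.X w) + (2:ℂ) • (ρ.H v ⊗ₜ σ.H w) := by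
  simp only [casimir, tensor, LinearMap.add_apply, LinearMap.comp_apply,
    LinearMap.smul_apply, TensorProduct.map_tmul, LinearMap.id_coe, id_eq, map_add,
    TensorProduct.tmul_add, TensorProduct.add_tmul, TensorProduct.tmul_smul,
    ← TensorProduct.smul_tmul']
  module

end SL2Rep

theorem adRep_casimir : adRep.casimir = (8:ℂ) • 1 := by
  refine LinearMap.ext fun f => funext fun i => ?_
  fin_cases i <;>
    simp [SL2Rep.casimir, adRep, Matrix.toLin'_apply, dotProduct, Fin.sum_univ_three] <;> ring

theorem prFF'_apply (f : Fin 3 → ℂ) : prFF' f = f 1 := rfl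

theorem prFF'_adRep_H (f : Fin 3 → ℂ) : prFF' (adRep.H f) = 0 := by
  simp [prFF', adRep, Matrix.toLin'_apply, dotProduct, Fin.sum_univ_three]

theorem prFF'_adRep_X (f : Fin 3 → ℂ) : prFF' (adRep.X f) = f 2 := by
  simp [prFF', adRep, Matrix.toLin'_apply, dotProduct, Fin.sum_univ_three]

theorem prFF'_adRep_Y (f : Fin 3 → ℂ) : prFF' (adRep.Y f) = -f 0 := by
  simp [prFF', adRep, Matrix.toLin'_apply, dotProduct, Fin.sum_univ_three]

theorem adRep_X_Hvec : adRep.X Hvec = (-2:ℂ) • Pi.single 0 1 := by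
  ext i; fin_cases i <;> simp [adRep, Hvec, Matrix.toLin'_apply]

theorem adRep_Y_Hvec : adRep.Y Hvec = (2:ℂ) • Pi.single 2 1 := by
  ext i; fin_cases i <;> simp [adRep, Hvec, Matrix.toLin'_apply]

theorem adRep_H_Hvec : adRep.H Hvec = 0 := by
  ext i; fin_cases i <;> simp [adRep, Hvec, Matrix.toLin'_apply]

section Translation

variable {V : Type*} [AddCommGroup V] [Module ℂ V] {ρ : SL2Rep V} {lam : ℂ}
  (hcas : ρ.casimir = (lam ^ 2 - 1) • (1 : Module.End ℂ V)) (T : V →ₗ[ℂ] ℂ)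

include hcas

theorem map_X_Y_add_map_Y_X {ν : ℂ} (hT : ∀ u, T (ρ.H u) = ν * T u) (u : V) :
    T (ρ.X (ρ.Y u)) + T (ρ.Y (ρ.X u)) = (lam ^ 2 - 1 - ν ^ 2) / 2 * T u := by
  have h := congrArg T (LinearMap.congr_fun hcas u)
  simp only [SL2Rep.casimir, LinearMap.add_apply, LinearMap.comp_apply, LinearMap.smul_apply,
    Module.End.one_apply, map_add, map_smul, smul_eq_mul, hT] at h
  linear_combination h / 2

theorem map_prFF'_casimir_tensor_adRep_tmul (v : V) (f : Fin 3 → ℂ) :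
    TensorProduct.map T prFF' ((ρ.tensor adRep).casimir (v ⊗ₜ f)) =
      ((lam ^ 2 + 7) * f 1 * T v - 4 * f 0 * T (ρ.X v) + 4 * f 2 * T (ρ.Y v)) ⊗ₜ[ℂ] (1 : ℂ) := by
  apply (TensorProduct.lid ℂ ℂ).injective
  rw [SL2Rep.casimir_tensor_tmul, hcas, adRep_casimir]
  simp only [map_add, map_smul, TensorProduct.map_tmul, LinearMap.smul_apply,
    Module.End.one_apply, prFF'_adRep_X, prFF'_adRep_Y, prFF'_adRep_H, TensorProduct.lid_tmul]
  simp only [prFF'_apply, smul_eq_mul]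
  ring

theorem casimir_tensor_adRep_tmul_Hvec (u : V) :
    (ρ.tensor adRep).casimir (u ⊗ₜ Hvec) = (lam ^ 2 + 7) • (u ⊗ₜ Hvec)
      + (8 : ℂ) • (ρ.X u ⊗ₜ Pi.single 2 1) - (8 : ℂ) • (ρ.Y u ⊗ₜ Pi.single 0 1) := by
  rw [SL2Rep.casimir_tensor_tmul, hcas, adRep_casimir, adRep_X_Hvec, adRep_Y_Hvec, adRep_H_Hvec]
  simp only [LinearMap.smul_apply, Module.End.one_apply, TensorProduct.tmul_smul,
    TensorProduct.tmul_zero, ← TensorProduct.smul_tmul', smul_zero, smul_smul]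
  module

theorem map_prFF'_casimir_tensor_adRep_tmul_Hvec (u : V) :
    TensorProduct.map T prFF' ((ρ.tensor adRep).casimir (u ⊗ₜ Hvec)) =
      ((lam ^ 2 + 7) * T u) ⊗ₜ[ℂ] (1 : ℂ) := by
  rw [map_prFF'_casimir_tensor_adRep_tmul hcas]
  simp [Hvec]

theorem map_prFF'_casimir_sq_tensor_adRep_tmul_Hvec {ν : ℂ} (hT : ∀ u, T (ρ.H u) = ν * T u)
    (u : V) :
    TensorProduct.map T prFF'
        ((ρ.tensor adRep).casimir ((ρ.tensor adRep).casimir (u ⊗ₜ Hvec))) =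
      (((lam ^ 2 + 7) ^ 2 + 16 * (lam ^ 2 - 1 - ν ^ 2)) * T u) ⊗ₜ[ℂ] (1 : ℂ) := by
  rw [casimir_tensor_adRep_tmul_Hvec hcas]
  simp only [map_add, map_sub, map_smul, map_prFF'_casimir_tensor_adRep_tmul hcas]
  apply (TensorProduct.lid ℂ ℂ).injective
  simp only [Hvec, Fin.isValue, Pi.single_eq_same, mul_one, ne_eq, zero_ne_one, not_false_eq_true,
    Pi.single_eq_of_ne, mul_zero, zero_mul, sub_zero, Fin.reduceEq, add_zero, sub_self, zero_add,
    one_ne_zero, zero_sub, map_sub, map_add, map_smul, TensorProduct.lid_tmul, smul_eq_mul, mul_neg,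
    sub_neg_eq_add]
  linear_combination 32 * map_X_Y_add_map_Y_X hcas T hT u

theorem map_prFF'_eigenprojection_tmul_Hvec {ν delta : ℂ} (hdelta : delta ^ 2 = 1)
    (hlam0 : lam ≠ 0) (hlamd : lam + delta ≠ 0) {Pa Pb Pc : Module.End ℂ (V ⊗[ℂ] (Fin 3 → ℂ))}
    (hsum : Pa + Pb + Pc = 1)
    (hca : (ρ.tensor adRep).casimir ∘ₗ Pa = ((lam + 2 * delta) ^ 2 - 1) • Pa)
    (hcb : (ρ.tensor adRep).casimir ∘ₗ Pb = (lam ^ 2 - 1) • Pb)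
    (hcc : (ρ.tensor adRep).casimir ∘ₗ Pc = ((lam - 2 * delta) ^ 2 - 1) • Pc)
    (hT : ∀ u, T (ρ.H u) = ν * T u) (u : V) :
    TensorProduct.map T prFF' (Pa (u ⊗ₜ[ℂ] Hvec)) =
      (((lam + delta) ^ 2 - ν ^ 2) / (2 * lam * (lam + delta))) • ((T u) ⊗ₜ[ℂ] (1 : ℂ)) := by
  have hinterp := sub_algebraMap_mul_sub_algebraMap_eq_smul hsum hca hcb hcc
  have hk : ((lam + 2 * delta) ^ 2 - 1 - (lam ^ 2 - 1)) * ((lam + 2 * delta) ^ 2 - 1 -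
      ((lam - 2 * delta) ^ 2 - 1)) = 32 * lam * (lam + delta) := by
    linear_combination (32 * lam ^ 2 + 32 * lam * delta) * hdelta
  have hk0 : (32 * lam * (lam + delta)) ≠ 0 := by simp [hlam0, hlamd]
  have h := congrArg (TensorProduct.map T prFF') (LinearMap.congr_fun hinterp (u ⊗ₜ Hvec))
  rw [hk] at h
  simp only [Module.End.mul_apply, LinearMap.sub_apply, Module.algebraMap_end_apply, map_sub,
    map_smul, LinearMap.smul_apply, map_prFF'_casimir_tensor_adRep_tmul_Hvec hcas,
    map_prFF'_casimir_sq_tensor_adRep_tmul_Hvec hcas T hT] at h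
  rw [← smul_right_inj hk0, ← h]
  apply (TensorProduct.lid ℂ ℂ).injective
  simp only [one_smul, Hvec, TensorProduct.map_tmul, prFF'_apply, Pi.single_eq_same, map_sub,
    TensorProduct.lid_tmul, smul_eq_mul, mul_one, map_smul]
  field_simp
  linear_combination (-96 * T u) * hdelta

end Translation

theorem translation_C3_general {V : Type*} [AddCommGroup V] [Module ℂ V]
    (ρ : SL2Rep V) (lam ν : ℂ) (delta : ℂ)
    (hdelta : delta = 1 ∨ delta = -1) (hlam0 : lam ≠ 0) (hlamd : lam ≠ -delta)
    (hcas : ρ.casimir = (lam^2 - 1) • (1 : Module.End ℂ V))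
    (P2 P0 Pm2 : Module.End ℂ (V ⊗[ℂ] (Fin 3 → ℂ)))
    (hsum : P2 + P0 + Pm2 = 1)
    (hc2 : (ρ.tensor adRep).casimir ∘ₗ P2 = ((lam+2)^2 - 1) • P2)
    (hc0 : (ρ.tensor adRep).casimir ∘ₗ P0 = (lam^2 - 1) • P0)
    (hcm : (ρ.tensor adRep).casimir ∘ₗ Pm2 = ((lam-2)^2 - 1) • Pm2)
    (T : V →ₗ[ℂ] ℂ) (hT : ∀ u, T (ρ.H u) = ν * T u)
    (Pdelta : Module.End ℂ (V ⊗[ℂ] (Fin 3 → ℂ)))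
    (hPdelta : (delta = 1 ∧ Pdelta = P2) ∨ (delta = -1 ∧ Pdelta = Pm2))
    (u : V) :
    TensorProduct.map T prFF' (Pdelta (u ⊗ₜ[ℂ] Hvec))
      = (((lam + delta)^2 - ν^2) / (2 * lam * (lam + delta)))
          • ((T u) ⊗ₜ[ℂ] (1:ℂ)) := by
  have hlamd' : lam + delta ≠ 0 := fun h => hlamd (by linear_combination h)
  have hdelta_sq : delta ^ 2 = 1 := by rcases hdelta with rfl | rfl <;> norm_num
  rcases hPdelta with ⟨rfl, rfl⟩ | ⟨rfl, rfl⟩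
  · exact map_prFF'_eigenprojection_tmul_Hvec hcas T hdelta_sq hlam0 hlamd' hsum
      (by rwa [mul_one]) hc0 (by rwa [mul_one]) hT u
  · exact map_prFF'_eigenprojection_tmul_Hvec hcas T hdelta_sq hlam0 hlamd' (Pc := P2)
      (by rw [← hsum]; abel) (by rwa [mul_neg_one, ← sub_eq_add_neg]) hc0
      (by rwa [mul_neg_one, sub_neg_eq_add]) hT u

/-- **Translation of symmetry breaking via `⊗ ℂ³`**:
`(T ⊗ pr_{F→F'}) ∘ pr_{λ→λ+2δ}(u ⊗ H) = ((λ+δ)² - ν²)/(2λ(λ+δ)) · Tu`. -/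
theorem translation_C3 {V : Type*} [AddCommGroup V] [Module ℂ V]
    (ρ : SL2Rep V) (hρ : ρ.IsSl2Rep) (lam ν : ℂ) (delta : ℂ)
    (hdelta : delta = 1 ∨ delta = -1) (hlam0 : lam ≠ 0) (hlamd : lam ≠ -delta)
    (hcas : ρ.casimir = (lam^2 - 1) • (1 : Module.End ℂ V))
    (P2 P0 Pm2 : Module.End ℂ (V ⊗[ℂ] (Fin 3 → ℂ)))
    (hsum : P2 + P0 + Pm2 = 1)
    (h22 : P2 ∘ₗ P2 = P2) (h00 : P0 ∘ₗ P0 = P0) (hmm : Pm2 ∘ₗ Pm2 = Pm2)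
    (h20 : P2 ∘ₗ P0 = 0) (h02 : P0 ∘ₗ P2 = 0)
    (h2m : P2 ∘ₗ Pm2 = 0) (hm2 : Pm2 ∘ₗ P2 = 0)
    (h0m : P0 ∘ₗ Pm2 = 0) (hm0 : Pm2 ∘ₗ P0 = 0)
    (hc2 : (ρ.tensor adRep).casimir ∘ₗ P2 = ((lam+2)^2 - 1) • P2)
    (hc0 : (ρ.tensor adRep).casimir ∘ₗ P0 = (lam^2 - 1) • P0)
    (hcm : (ρ.tensor adRep).casimir ∘ₗ Pm2 = ((lam-2)^2 - 1) • Pm2)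
    (T : V →ₗ[ℂ] ℂ) (hT : ∀ u, T (ρ.H u) = ν * T u)
    (Pdelta : Module.End ℂ (V ⊗[ℂ] (Fin 3 → ℂ)))
    (hPdelta : (delta = 1 ∧ Pdelta = P2) ∨ (delta = -1 ∧ Pdelta = Pm2))
    (u : V) :
    TensorProduct.map T prFF' (Pdelta (u ⊗ₜ[ℂ] Hvec))
      = (((lam + delta)^2 - ν^2) / (2 * lam * (lam + delta)))
          • ((T u) ⊗ₜ[ℂ] (1:ℂ)) :=
  translation_C3_general ρ lam ν delta hdelta hlam0 hlamd hcas P2 P0 Pm2 hsum hc2 hc0 hcm T hT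
    Pdelta hPdelta u
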